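/- arXiv:1908.01955 — 2 statements merged into one kernel-verified Lean document; each statement's English description precedes it below -/
import Mathlib

section
/- Let N, d be positive natural numbers, let U ∈ M_N(ℂ) be unitary, θ(x) := U x U*, and let ρ ∈ M_N(ℂ) be a density matrix which is stationary, i.e. U ρ U* = ρ. Let γ : Fin d → M_N(ℂ) be a family of self-adjoint matrices with γ_i γ_j = δ_{ij} γ_j and ∑_i γ_i = 1. Define the transition expectation 𝓔 : M_d(ℂ) × M_N(ℂ) → M_N(ℂ) by 𝓔(a, b) := θ(∑_j a_{jj} • γ_j b γ_j). Then for every n ≥ 1 and all a₁, …, aₙ ∈ M_d(ℂ): Tr(ρ · 𝓔(a₁, 𝓔(a₂, ⋯ 𝓔(aₙ, 1) ⋯))) = ∑_{i₁,…,iₙ ∈ Fin d} (∏_{k=1}^n (a_k)_{i_k i_k}) · Tr(Γ_{iₙ⋯i₁} ρ Γ_{iₙ⋯i₁}*), where Γ_{iₙ⋯i₁} := θ^{n−1}(γ_{iₙ}) ⋯ θ(γ_{i₂}) γ_{i₁}. -/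
open Matrix BigOperators
open scoped ComplexOrder

/-- The transition expectation `𝓔(a, b) := θ(∑ j, a j j • γ j * b * γ j)`
with `θ(x) = U x Uᴴ`. -/
noncomputable def transExp {d N : ℕ} (U : Matrix (Fin N) (Fin N) ℂ)
    (γ : Fin d → Matrix (Fin N) (Fin N) ℂ)
    (a : Matrix (Fin d) (Fin d) ℂ) (b : Matrix (Fin N) (Fin N) ℂ) :
    Matrix (Fin N) (Fin N) ℂ :=
  U * (∑ j, a j j • (γ j * b * γ j)) * Uᴴ

/-- The nested expectation `𝓔(a₁, 𝓔(a₂, ⋯ 𝓔(aₙ, 1) ⋯))`. -/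
noncomputable def nestExp {d N : ℕ} (U : Matrix (Fin N) (Fin N) ℂ)
    (γ : Fin d → Matrix (Fin N) (Fin N) ℂ) :
    (n : ℕ) → (Fin n → Matrix (Fin d) (Fin d) ℂ) → Matrix (Fin N) (Fin N) ℂ
  | 0, _ => 1
  | n + 1, a => transExp U γ (a 0) (nestExp U γ n fun k => a k.succ)

/-- `Γ_{iₙ⋯i₁} := θ^{n−1}(γ_{iₙ}) ⋯ θ(γ_{i₂}) γ_{i₁}` where `θᵏ(x) = Uᵏ x (Uᵏ)ᴴ`. -/
noncomputable def GammaChain {d N : ℕ} (U : Matrix (Fin N) (Fin N) ℂ)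
    (γ : Fin d → Matrix (Fin N) (Fin N) ℂ) (n : ℕ) (i : Fin n → Fin d) :
    Matrix (Fin N) (Fin N) ℂ :=
  (List.ofFn fun k : Fin n =>
    U ^ (Fin.rev k : ℕ) * γ (i (Fin.rev k)) * (U ^ (Fin.rev k : ℕ))ᴴ).prod

/-! ### Auxiliary machinery -/

section Aux
variable {d N : ℕ} (U : Matrix (Fin N) (Fin N) ℂ) (γ : Fin d → Matrix (Fin N) (Fin N) ℂ)

/-- The auxiliary chain `M = γ_{iₙ} Uᴴ γ_{iₙ₋₁} Uᴴ ⋯ γ_{i₁} Uᴴ`. -/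
noncomputable def Mchain (n : ℕ) (i : Fin n → Fin d) : Matrix (Fin N) (Fin N) ℂ :=
  (List.ofFn fun k : Fin n => γ (i (Fin.rev k)) * Uᴴ).prod

lemma Mchain_succ_last (n : ℕ) (i : Fin (n+1) → Fin d) :
    Mchain U γ (n+1) i = Mchain U γ n (fun k => i k.succ) * (γ (i 0) * Uᴴ) := by
  simp only [Mchain, List.ofFn_succ', Fin.rev_castSucc, Fin.rev_last, List.concat_eq_append,
    List.prod_append, List.prod_cons, List.prod_nil, mul_one]

lemma Mchain_succ_head (n : ℕ) (i : Fin (n+1) → Fin d) :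
    Mchain U γ (n+1) i = γ (i (Fin.last n)) * Uᴴ * Mchain U γ n (fun k => i k.castSucc) := by
  simp only [Mchain, List.ofFn_succ, List.prod_cons, Fin.rev_succ, Fin.rev_zero, mul_assoc]

end Aux

lemma Gamma_succ_head {d N : ℕ} (U : Matrix (Fin N) (Fin N) ℂ)
    (γ : Fin d → Matrix (Fin N) (Fin N) ℂ) (n : ℕ) (i : Fin (n+1) → Fin d) :
    GammaChain U γ (n+1) i =
      U ^ n * γ (i (Fin.last n)) * (U ^ n)ᴴ * GammaChain U γ n (fun k => i k.castSucc) := by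
  simp only [GammaChain, List.ofFn_succ, List.prod_cons, Fin.rev_succ, Fin.rev_zero,
    Fin.coe_castSucc, Fin.val_last, Fin.val_rev_zero, Nat.pred_succ, mul_assoc]

section Unit
variable {N : ℕ} {U : Matrix (Fin N) (Fin N) ℂ}

lemma pow_unitary_left (hU2 : Uᴴ * U = 1) (n : ℕ) : (U ^ n)ᴴ * U ^ n = 1 := by
  induction n with
  | zero => simp
  | succ n ih =>
    rw [pow_succ' U n, conjTranspose_mul, mul_assoc, ← mul_assoc Uᴴ, hU2, one_mul, ih]

lemma cancel_aux (hU2 : Uᴴ * U = 1) (n : ℕ) : (U ^ n)ᴴ * Uᴴ * U ^ n = Uᴴ := by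
  rw [← conjTranspose_mul, ← pow_succ', conjTranspose_pow, pow_succ', ← conjTranspose_pow,
    mul_assoc, pow_unitary_left hU2, mul_one]

end Unit

lemma key1 {d N : ℕ} (U : Matrix (Fin N) (Fin N) ℂ)
    (γ : Fin d → Matrix (Fin N) (Fin N) ℂ) (hsa : ∀ j, (γ j)ᴴ = γ j) (n : ℕ) :
    ∀ (a : Fin n → Matrix (Fin d) (Fin d) ℂ) (σ : Matrix (Fin N) (Fin N) ℂ),
      (σ * nestExp U γ n a).trace =
        ∑ i : Fin n → Fin d, (∏ k, a k (i k) (i k)) *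
          (Mchain U γ n i * σ * (Mchain U γ n i)ᴴ).trace := by
  induction n with
  | zero =>
    intro a σ
    simp [nestExp, Mchain]
  | succ n ih =>
    intro a σ
    set B := nestExp U γ n (fun k => a k.succ) with hB
    have hexp : σ * nestExp U γ (n+1) a
        = ∑ j, (a 0) j j • (σ * U * (γ j * B * γ j) * Uᴴ) := by
      show σ * transExp U γ (a 0) B = _
      simp only [transExp, Matrix.mul_sum, Matrix.sum_mul, Matrix.mul_smul, Matrix.smul_mul,
        mul_assoc]
    have hterm : ∀ j, (σ * U * (γ j * B * γ j) * Uᴴ).trace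
        = ((γ j * Uᴴ * σ * U * γ j) * B).trace := by
      intro j
      calc (σ * U * (γ j * B * γ j) * Uᴴ).trace
          = ((σ * U * γ j * B) * (γ j * Uᴴ)).trace := by
            congr 1; simp only [mul_assoc]
        _ = ((γ j * Uᴴ) * (σ * U * γ j * B)).trace := trace_mul_comm _ _
        _ = ((γ j * Uᴴ * σ * U * γ j) * B).trace := by
            congr 1; simp only [mul_assoc]
    have hih := fun j => ih (fun k => a k.succ) (γ j * Uᴴ * σ * U * γ j)
    rw [hexp, trace_sum]
    simp only [trace_smul, smul_eq_mul, hterm]; simp only [hB, hih]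
    rw [← Equiv.sum_comp (Fin.consEquiv fun _ => Fin d), Fintype.sum_prod_type]
    apply Finset.sum_congr rfl
    intro j _
    rw [Finset.mul_sum]
    apply Finset.sum_congr rfl
    intro i' _
    simp only [Fin.consEquiv_apply, Fin.prod_univ_succ, Fin.cons_zero, Fin.cons_succ,
      Mchain_succ_last, conjTranspose_mul, conjTranspose_conjTranspose, hsa, mul_assoc]

lemma key2 {d N : ℕ} {U : Matrix (Fin N) (Fin N) ℂ} (hU2 : Uᴴ * U = 1)
    (γ : Fin d → Matrix (Fin N) (Fin N) ℂ) (n : ℕ) :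
    ∀ i : Fin n → Fin d,
      U * GammaChain U γ n i = U ^ n * Mchain U γ n i * U := by
  induction n with
  | zero => intro i; simp [GammaChain, Mchain]
  | succ n ih =>
    intro i
    have hΓ : GammaChain U γ n (fun k => i k.castSucc)
        = Uᴴ * (U ^ n * Mchain U γ n (fun k => i k.castSucc) * U) := by
      rw [← ih, ← mul_assoc, hU2, one_mul]
    have hc : ∀ X : Matrix (Fin N) (Fin N) ℂ,
        (U ^ n)ᴴ * (Uᴴ * (U ^ n * X)) = Uᴴ * X := by
      intro X
      rw [← mul_assoc, ← mul_assoc, cancel_aux hU2]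
    rw [Gamma_succ_head, Mchain_succ_head, hΓ]
    simp only [pow_succ', mul_assoc, hc]

lemma key3 {d N : ℕ} {U : Matrix (Fin N) (Fin N) ℂ} (hU1 : U * Uᴴ = 1) (hU2 : Uᴴ * U = 1)
    {ρ : Matrix (Fin N) (Fin N) ℂ} (hstat : U * ρ * Uᴴ = ρ)
    (γ : Fin d → Matrix (Fin N) (Fin N) ℂ) (n : ℕ) (i : Fin n → Fin d) :
    (GammaChain U γ n i * ρ * (GammaChain U γ n i)ᴴ).trace
      = (Mchain U γ n i * ρ * (Mchain U γ n i)ᴴ).trace := by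
  set M := Mchain U γ n i with hM
  have hΓ : GammaChain U γ n i = Uᴴ * (U ^ n * M * U) := by
    rw [← key2 hU2 γ n i, ← mul_assoc, hU2, one_mul]
  have hsr : ∀ X : Matrix (Fin N) (Fin N) ℂ, U * (ρ * (Uᴴ * X)) = ρ * X := by
    intro X
    rw [← mul_assoc, ← mul_assoc, hstat]
  have hmat : GammaChain U γ n i * ρ * (GammaChain U γ n i)ᴴ
      = Uᴴ * (U ^ n * (M * ρ * Mᴴ) * (U ^ n)ᴴ) * U := by
    rw [hΓ]
    simp only [conjTranspose_mul, conjTranspose_conjTranspose, mul_assoc, hsr]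
  rw [hmat, Matrix.trace_mul_cycle, ← mul_assoc, hU1, one_mul,
    Matrix.trace_mul_cycle, ← mul_assoc, pow_unitary_left hU2, one_mul]

/-- for a stationary density matrix `ρ` and an orthogonal partition of
the identity `γ`, the quantum Markov chain expectation equals the correlation kernel. -/
theorem stmt2 (d N : ℕ) (hd : 0 < d) (hN : 0 < N)
    (U : Matrix (Fin N) (Fin N) ℂ) (hU1 : U * Uᴴ = 1) (hU2 : Uᴴ * U = 1)
    (ρ : Matrix (Fin N) (Fin N) ℂ) (hρ : ρ.PosSemidef) (hρtr : ρ.trace = 1)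
    (hstat : U * ρ * Uᴴ = ρ)
    (γ : Fin d → Matrix (Fin N) (Fin N) ℂ)
    (hsa : ∀ j, (γ j)ᴴ = γ j)
    (horth : ∀ j k, γ j * γ k = if j = k then γ k else 0)
    (hsum : ∑ j, γ j = 1)
    (n : ℕ) (hn : 1 ≤ n) (a : Fin n → Matrix (Fin d) (Fin d) ℂ) :
    (ρ * nestExp U γ n a).trace =
      ∑ i : Fin n → Fin d, (∏ k : Fin n, a k (i k) (i k)) *
        (GammaChain U γ n i * ρ * (GammaChain U γ n i)ᴴ).trace := by
  rw [key1 U γ hsa n a ρ]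
  exact Finset.sum_congr rfl fun i _ => by rw [key3 hU1 hU2 hstat γ n i]
end

section
/- In M₂(ℂ), let γ₁ := diag(1,0), γ₂ := diag(0,1), U := diag(e^{i}, 1), θ(x) := U x U*, and ρ := diag(λ, 1−λ) for λ ∈ ℝ with 0 ≤ λ ≤ 1. For n ≥ 1 and a tuple i : Fin n → Fin 2 set P_i := Tr(Γ_i ρ Γ_i*) with Γ_i := θⁿ(γ_{i(n)}) ⋯ θ(γ_{i(1)}), and define S_n := ∑_{i : Fin n → Fin 2} (−(Re P_i) · log(Re P_i)) with the convention 0 · log 0 = 0. Then for every n ≥ 1, S_n = −λ log λ − (1−λ) log(1−λ). -/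
open Matrix BigOperators

/-- The partition of unity `γ₁ = diag(1,0)`, `γ₂ = diag(0,1)` of the spin model. -/
noncomputable def spinGamma : Fin 2 → Matrix (Fin 2) (Fin 2) ℂ :=
  ![!![1, 0; 0, 0], !![0, 0; 0, 1]]

/-- The unitary `U = diag(eⁱ, 1)` implementing the evolution `θ(x) = U x Uᴴ`. -/
noncomputable def spinU : Matrix (Fin 2) (Fin 2) ℂ :=
  !![Complex.exp Complex.I, 0; 0, 1]

/-- The density matrix `ρ = diag(λ, 1−λ)`. -/
noncomputable def spinRho (l : ℝ) : Matrix (Fin 2) (Fin 2) ℂ :=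
  !![(l : ℂ), 0; 0, 1 - (l : ℂ)]

/-- `Γ_i = θⁿ(γ_{i(n)}) θ^{n−1}(γ_{i(n−1)}) ⋯ θ(γ_{i(1)})` where `θᵏ(x) = Uᵏ x (Uᵏ)ᴴ`. -/
noncomputable def spinGammaOp (n : ℕ) (i : Fin n → Fin 2) : Matrix (Fin 2) (Fin 2) ℂ :=
  (List.ofFn fun k : Fin n =>
    spinU ^ ((Fin.rev k : ℕ) + 1) * spinGamma (i (Fin.rev k)) *
      (spinU ^ ((Fin.rev k : ℕ) + 1))ᴴ).prod

/-- The `n`-step entropy `S_n = ∑_i −(Re P_i) log (Re P_i)` with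
`P_i = Tr(Γ_i ρ Γ_iᴴ)` and the convention `0 log 0 = 0`. -/
noncomputable def spinEntropy (l : ℝ) (n : ℕ) : ℝ :=
  ∑ i : Fin n → Fin 2,
    Real.negMulLog ((spinGammaOp n i * spinRho l * (spinGammaOp n i)ᴴ).trace.re)

/-! The unitary `U` is diagonal, so it commutes with the projections `γ_c` and every `θᵏ` fixes
them. Hence `Γ_i` is a product of mutually orthogonal projections: it is `γ_c` if `i` is constantly
`c` and `0` otherwise. Only the two constant paths contribute, with `P = λ` and `P = 1 − λ`. -/

theorem Unitary.pow_mul_mul_star_pow_of_commute {R : Type*} [Monoid R] [StarMul R] {u x : R}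
    (hu : u ∈ unitary R) (hx : Commute u x) (m : ℕ) : u ^ m * x * star (u ^ m) = x := by
  rw [(hx.pow_left m).eq, mul_assoc, mul_star_self_of_mem (pow_mem hu m), mul_one]

section OrthogonalIdempotents

variable {M ι : Type*} [MonoidWithZero M] [DecidableEq ι] {e : ι → M}

theorem List.prod_map_cons_of_orthogonal (he : ∀ a b, e a * e b = if a = b then e a else 0) :
    ∀ (c : ι) (L : List ι), ((c :: L).map e).prod = if ∀ x ∈ L, x = c then e c else 0
  | c, [] => by simp
  | c, d :: L => by
    rw [List.map_cons, List.prod_cons, List.prod_map_cons_of_orthogonal he d L]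
    by_cases hcd : d = c
    · subst hcd
      simp only [List.forall_mem_cons, true_and]
      split_ifs <;> simp [he]
    · rw [if_neg (show ¬∀ x ∈ d :: L, x = c from fun h => hcd (h d List.mem_cons_self))]
      split_ifs <;> simp [he, Ne.symm hcd]

theorem List.prod_ofFn_of_orthogonal (he : ∀ a b, e a * e b = if a = b then e a else 0) {m : ℕ}
    (i : Fin (m + 1) → ι) :
    (List.ofFn fun k => e (i k)).prod = if ∀ k, i k = i 0 then e (i 0) else 0 := by
  change (List.ofFn (e ∘ i)).prod = _
  rw [← List.map_ofFn, List.ofFn_succ, List.prod_map_cons_of_orthogonal he]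
  simp [Fin.forall_fin_succ]

end OrthogonalIdempotents

theorem spinGamma_mul (a b : Fin 2) :
    spinGamma a * spinGamma b = if a = b then spinGamma a else 0 := by
  fin_cases a <;> fin_cases b <;>
    · ext x y
      fin_cases x <;> fin_cases y <;> simp [spinGamma]

theorem spinU_mem_unitary : spinU ∈ unitary (Matrix (Fin 2) (Fin 2) ℂ) := by
  rw [← Matrix.unitaryGroup, Matrix.mem_unitaryGroup_iff, star_eq_conjTranspose]
  have h : Complex.exp Complex.I * starRingEnd ℂ (Complex.exp Complex.I) = 1 := by
    rw [← Complex.exp_conj, ← Complex.exp_add]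
    simp
  ext x y
  fin_cases x <;> fin_cases y <;> simp [spinU, mul_apply, Fin.sum_univ_two, h]

theorem commute_spinU_spinGamma (c : Fin 2) : Commute spinU (spinGamma c) := by
  fin_cases c <;> simp [Commute, SemiconjBy, spinU, spinGamma]

theorem spinGammaOp_succ_eq_ite (m : ℕ) (i : Fin (m + 1) → Fin 2) :
    spinGammaOp (m + 1) i =
      if ∀ k, i k = i (Fin.last m) then spinGamma (i (Fin.last m)) else 0 := by
  have hconj (k : ℕ) (c : Fin 2) : spinU ^ k * spinGamma c * (spinU ^ k)ᴴ = spinGamma c :=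
    Unitary.pow_mul_mul_star_pow_of_commute spinU_mem_unitary (commute_spinU_spinGamma c) k
  simp only [spinGammaOp, hconj]
  rw [List.prod_ofFn_of_orthogonal spinGamma_mul, Fin.rev_zero]
  exact if_congr (Fin.rev_surjective.forall (p := fun k => i k = i (Fin.last m))).symm rfl rfl

theorem spinGammaOp_const (m : ℕ) (c : Fin 2) :
    spinGammaOp (m + 1) (fun _ => c) = spinGamma c := by
  simp [spinGammaOp_succ_eq_ite]

theorem spinGammaOp_eq_zero {n : ℕ} {i : Fin n → Fin 2} {a b : Fin n} (h : i a ≠ i b) :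
    spinGammaOp n i = 0 := by
  obtain ⟨m, rfl⟩ := Nat.exists_eq_succ_of_ne_zero a.pos.ne'
  rw [spinGammaOp_succ_eq_ite, if_neg fun hi => h ((hi a).trans (hi b).symm)]

theorem spinGamma_rho_trace_re (l : ℝ) (c : Fin 2) :
    (spinGamma c * spinRho l * (spinGamma c)ᴴ).trace.re = ![l, 1 - l] c := by
  fin_cases c <;> simp [spinGamma, spinRho, trace_fin_two, vecMul, dotProduct, Fin.sum_univ_two]

theorem stmt13_general (l : ℝ) (n : ℕ) (hn : 1 ≤ n) :
    spinEntropy l n = Real.negMulLog l + Real.negMulLog (1 - l) := by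
  obtain ⟨m, rfl⟩ := Nat.exists_eq_add_of_le' hn
  have hconst_ne : (fun _ : Fin (m + 1) => (0 : Fin 2)) ≠ fun _ => 1 :=
    fun h => zero_ne_one (congrFun h 0)
  have hnonconst (i : Fin (m + 1) → Fin 2) (h0 : i ≠ fun _ => 0) (h1 : i ≠ fun _ => 1) :
      spinGammaOp (m + 1) i = 0 := by
    obtain ⟨a, ha⟩ := Function.ne_iff.mp h0
    obtain ⟨b, hb⟩ := Function.ne_iff.mp h1
    exact spinGammaOp_eq_zero (a := a) (b := b) (by omega)
  rw [spinEntropy, Finset.sum_eq_add _ _ hconst_ne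
    (fun i _ hi => by simp [hnonconst i hi.1 hi.2]) (by simp) (by simp)]
  simp [spinGammaOp_const, spinGamma_rho_trace_re]

/-- for every `n ≥ 1`, `S_n = −λ log λ − (1−λ) log (1−λ)`. -/
theorem stmt13 (l : ℝ) (hl0 : 0 ≤ l) (hl1 : l ≤ 1) (n : ℕ) (hn : 1 ≤ n) :
    spinEntropy l n = Real.negMulLog l + Real.negMulLog (1 - l) :=
  stmt13_general l n hn
end
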